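/- Let N, d ≥ 1, B > 0, let σ ∈ [0,1), let W ∈ ℝ^{N×N} be doubly stochastic with ‖W − (1/N)𝟙𝟙ᵀ‖_* ≤ σ, let θ* ∈ ℝ^d, and let ε ≥ 0 satisfy ε ≤ (1 − σ²)/(8√2 · BN). Let Θ ∈ ℝ^{N×d} have rows θ_1,…,θ_N with row average θ̄ and consensus error S = ∑_i ‖θ_i − θ̄‖², and let G ∈ ℝ^{N×d} have rows g_1,…,g_N with ‖g_i‖ ≤ B(‖θ_i‖+1) for all i. Set Θ' = WΘ + εG with consensus error S'. Then S' ≤ ((1+σ²)/2) S + (32 ε² B² N/(1−σ²)) ‖θ̄ − θ*‖² + (16 N B² (‖θ*‖² + 1)/(1−σ²)) ε². -/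

import Mathlib

/-!
With `M = W - 𝟙𝟙ᵀ/N` and the centering `Θ ↦ Θ - 𝟙θ̄ᵀ`, double stochasticity gives
`center Θ' = M · center Θ + ε · center G`, so every column of `center Θ'` has norm at most
`σ ‖xⱼ‖ + ε ‖pⱼ‖`. Young's inequality with weight `t = (3 + σ²)/4` turns this into
`S' ≤ 4σ²/(3+σ²) · S + 4ε²/(1-σ²) · S_G`. By the bias–variance decomposition and the growth
bound on `G`, `S_G ≤ ∑ ‖gᵢ‖² ≤ 2B² (S + N ‖θ̄‖² + N)`, and `‖θ̄‖² ≤ 2‖θ̄ - θ*‖² + 2‖θ*‖²`.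
Finally the smallness of `ε` gives `4σ²/(3+σ²) + 8B²ε²/(1-σ²) ≤ (1+σ²)/2`.
-/

noncomputable def euclNorm {d : ℕ} (v : Fin d → ℝ) : ℝ :=
  ‖(WithLp.equiv 2 (Fin d → ℝ)).symm v‖

noncomputable def specNorm {N : ℕ} (M : Matrix (Fin N) (Fin N) ℝ) : ℝ :=
  ‖Matrix.toEuclideanCLM (𝕜 := ℝ) M‖

def DoublyStochastic {N : ℕ} (W : Matrix (Fin N) (Fin N) ℝ) : Prop :=
  (∀ i j, 0 ≤ W i j) ∧ (∀ i, ∑ j, W i j = 1) ∧ (∀ j, ∑ i, W i j = 1)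

-- `θ̄ = (1/N) Θᵀ 𝟙`
noncomputable def rowAvg {N d : ℕ} (Θ : Matrix (Fin N) (Fin d) ℝ) : Fin d → ℝ :=
  fun j => (N : ℝ)⁻¹ * ∑ i, Θ i j

-- `S = ∑ᵢ ‖θᵢ − θ̄‖²`
noncomputable def consErr {N d : ℕ} (Θ : Matrix (Fin N) (Fin d) ℝ) : ℝ :=
  ∑ i, (euclNorm (fun j => Θ i j - rowAvg Θ j)) ^ 2

open scoped Matrix

lemma euclNorm_nonneg {d : ℕ} (v : Fin d → ℝ) : 0 ≤ euclNorm v := norm_nonneg _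

lemma euclNorm_sq {d : ℕ} (v : Fin d → ℝ) : euclNorm v ^ 2 = ∑ j, v j ^ 2 := by
  rw [euclNorm, EuclideanSpace.norm_eq, Real.sq_sqrt (by positivity)]
  simp [sq_abs]

lemma euclNorm_add_le {d : ℕ} (u v : Fin d → ℝ) : euclNorm (u + v) ≤ euclNorm u + euclNorm v :=
  norm_add_le _ _

lemma euclNorm_smul {d : ℕ} (c : ℝ) (v : Fin d → ℝ) : euclNorm (c • v) = |c| * euclNorm v := by
  rw [euclNorm, euclNorm, WithLp.equiv_symm_apply, WithLp.toLp_smul, norm_smul, Real.norm_eq_abs]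

lemma euclNorm_sq_le_two_mul {d : ℕ} (u v : Fin d → ℝ) :
    euclNorm u ^ 2 ≤ 2 * euclNorm (u - v) ^ 2 + 2 * euclNorm v ^ 2 := by
  have htri : euclNorm u ≤ euclNorm (u - v) + euclNorm v := by
    simpa using euclNorm_add_le (u - v) v
  have := pow_le_pow_left₀ (euclNorm_nonneg u) htri 2
  linarith [add_sq_le (a := euclNorm (u - v)) (b := euclNorm v)]

lemma euclNorm_mulVec_le {N : ℕ} (M : Matrix (Fin N) (Fin N) ℝ) (v : Fin N → ℝ) :
    euclNorm (M *ᵥ v) ≤ specNorm M * euclNorm v := by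
  simpa [euclNorm, specNorm, Matrix.toEuclideanCLM_toLp] using
    (Matrix.toEuclideanCLM (𝕜 := ℝ) M).le_opNorm (WithLp.toLp 2 v)

lemma add_sq_le_div_add_div (a b : ℝ) {t : ℝ} (ht0 : 0 < t) (ht1 : t < 1) :
    (a + b) ^ 2 ≤ a ^ 2 / t + b ^ 2 / (1 - t) := by
  have ht1' : 0 < 1 - t := sub_pos.mpr ht1
  rw [div_add_div _ _ ht0.ne' ht1'.ne', le_div_iff₀ (by positivity)]
  nlinarith [sq_nonneg ((1 - t) * a - t * b)]

lemma mul_sq_le_sq_of_le_div {ε B r : ℝ} {N : ℕ} (hN : 1 ≤ N) (hB : 0 < B) (hε : 0 ≤ ε)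
    (h : ε ≤ r / (8 * √2 * B * N)) : 128 * ε ^ 2 * B ^ 2 ≤ r ^ 2 := by
  have hN' : (1 : ℝ) ≤ N := by exact_mod_cast hN
  have hle : ε * (8 * √2 * B * N) ≤ r := by
    rwa [← le_div_iff₀ (by positivity)]
  have hsq : (ε * (8 * √2 * B * N)) ^ 2 = 128 * ε ^ 2 * B ^ 2 * (N : ℝ) ^ 2 := by
    rw [mul_pow, mul_pow, mul_pow, mul_pow, Real.sq_sqrt zero_le_two]
    ring
  have := pow_le_pow_left₀ (by positivity) hle 2
  rw [hsq] at this
  nlinarith [mul_nonneg (mul_nonneg (sq_nonneg ε) (sq_nonneg B)) (sub_nonneg.mpr hN')]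

lemma contraction_factor_le {σ ε B : ℝ} (hσ0 : 0 ≤ σ) (hσ1 : σ < 1)
    (h : 128 * ε ^ 2 * B ^ 2 ≤ (1 - σ ^ 2) ^ 2) :
    σ ^ 2 / ((3 + σ ^ 2) / 4) + 8 * B ^ 2 * (ε ^ 2 / (1 - σ ^ 2)) ≤ (1 + σ ^ 2) / 2 := by
  have hgap : 0 < 1 - σ ^ 2 := by nlinarith
  have hsigma : σ ^ 2 / ((3 + σ ^ 2) / 4) ≤ (1 + σ ^ 2) / 2 - (1 - σ ^ 2) / 16 := by
    rw [div_le_iff₀ (by positivity)]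
    nlinarith [mul_nonneg hgap.le hgap.le]
  have hstep : 8 * B ^ 2 * (ε ^ 2 / (1 - σ ^ 2)) ≤ (1 - σ ^ 2) / 16 := by
    rw [← mul_div_assoc, div_le_div_iff₀ hgap (by norm_num)]
    nlinarith
  linarith

section Consensus

variable {N d : ℕ}

noncomputable def centered (Θ : Matrix (Fin N) (Fin d) ℝ) : Matrix (Fin N) (Fin d) ℝ :=
  Matrix.of fun i j => Θ i j - rowAvg Θ j

lemma consErr_eq_sum_transpose (Θ : Matrix (Fin N) (Fin d) ℝ) :
    consErr Θ = ∑ j, euclNorm ((centered Θ)ᵀ j) ^ 2 := by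
  simp only [consErr, euclNorm_sq]
  exact Finset.sum_comm

lemma centered_add (A B : Matrix (Fin N) (Fin d) ℝ) :
    centered (A + B) = centered A + centered B := by
  ext i j
  simp only [centered, rowAvg, Matrix.of_apply, Matrix.add_apply, Finset.sum_add_distrib]
  ring

lemma centered_smul (c : ℝ) (A : Matrix (Fin N) (Fin d) ℝ) :
    centered (c • A) = c • centered A := by
  ext i j
  simp only [centered, rowAvg, Matrix.of_apply, Matrix.smul_apply, smul_eq_mul, ← Finset.mul_sum]
  ring

lemma rowAvg_mul {W : Matrix (Fin N) (Fin N) ℝ} (hcol : ∀ k, ∑ i, W i k = 1)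
    (Θ : Matrix (Fin N) (Fin d) ℝ) : rowAvg (W * Θ) = rowAvg Θ := by
  ext j
  simp only [rowAvg, Matrix.mul_apply]
  rw [Finset.sum_comm]
  simp only [← Finset.sum_mul, hcol, one_mul]

lemma sum_eq_mul_rowAvg (Θ : Matrix (Fin N) (Fin d) ℝ) (j : Fin d) :
    ∑ i, Θ i j = N * rowAvg Θ j := by
  rcases N.eq_zero_or_pos with rfl | hN
  · simp
  · rw [rowAvg, mul_inv_cancel_left₀ (by positivity)]

-- `W - 𝟙𝟙ᵀ/N` annihilates `𝟙θ̄ᵀ` (row sums of `W`), and `WΘ` keeps the row average of `Θ`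
-- (column sums).
lemma centered_mul {W : Matrix (Fin N) (Fin N) ℝ} (hrow : ∀ i, ∑ k, W i k = 1)
    (hcol : ∀ k, ∑ i, W i k = 1) (Θ : Matrix (Fin N) (Fin d) ℝ) :
    centered (W * Θ) = (W - (N : ℝ)⁻¹ • Matrix.of fun (_ : Fin N) (_ : Fin N) => (1 : ℝ))
      * centered Θ := by
  ext i j
  have hexpand : ∀ k, (W - (N : ℝ)⁻¹ • Matrix.of fun (_ : Fin N) (_ : Fin N) => (1 : ℝ)) i k
      * centered Θ k j = W i k * Θ k j - rowAvg Θ j * W i k - (N : ℝ)⁻¹ * Θ k j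
        + (N : ℝ)⁻¹ * rowAvg Θ j := by
    intro k
    simp only [centered, Matrix.sub_apply, Matrix.smul_apply, Matrix.of_apply, smul_eq_mul]
    ring
  rw [Matrix.mul_apply, Finset.sum_congr rfl fun k _ => hexpand k]
  simp only [Matrix.mul_apply, Finset.sum_add_distrib, Finset.sum_sub_distrib,
    ← Finset.mul_sum, hrow, Finset.sum_const, Finset.card_univ, Fintype.card_fin, nsmul_eq_mul,
    sum_eq_mul_rowAvg Θ j, centered, Matrix.of_apply, rowAvg_mul hcol]
  ring

theorem consErr_mul_add_smul_le {W : Matrix (Fin N) (Fin N) ℝ} (hrow : ∀ i, ∑ k, W i k = 1)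
    (hcol : ∀ k, ∑ i, W i k = 1) {σ : ℝ} (hspec : specNorm (W - (N : ℝ)⁻¹ •
      Matrix.of fun (_ : Fin N) (_ : Fin N) => (1 : ℝ)) ≤ σ)
    (ε : ℝ) (Θ G : Matrix (Fin N) (Fin d) ℝ) {t : ℝ} (ht0 : 0 < t) (ht1 : t < 1) :
    consErr (W * Θ + ε • G) ≤ σ ^ 2 / t * consErr Θ + ε ^ 2 / (1 - t) * consErr G := by
  set M := W - (N : ℝ)⁻¹ • Matrix.of fun (_ : Fin N) (_ : Fin N) => (1 : ℝ)
  set x := fun j => (centered Θ)ᵀ j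
  set p := fun j => (centered G)ᵀ j
  have hcolumn : ∀ j, (M * centered Θ + ε • centered G)ᵀ j = M *ᵥ x j + ε • p j := by
    intro j
    ext i
    simp [x, p, Matrix.mul_apply, Matrix.mulVec, dotProduct]
  have hcolumn_le :
      ∀ j, euclNorm (M *ᵥ x j + ε • p j) ≤ σ * euclNorm (x j) + |ε| * euclNorm (p j) := by
    intro j
    calc _ ≤ euclNorm (M *ᵥ x j) + euclNorm (ε • p j) := euclNorm_add_le _ _
      _ ≤ σ * euclNorm (x j) + |ε| * euclNorm (p j) := by
          rw [euclNorm_smul]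
          gcongr
          exact (euclNorm_mulVec_le M _).trans
            (mul_le_mul_of_nonneg_right hspec (euclNorm_nonneg _))
  rw [consErr_eq_sum_transpose, consErr_eq_sum_transpose Θ, consErr_eq_sum_transpose G,
    centered_add, centered_smul, centered_mul hrow hcol, Finset.mul_sum, Finset.mul_sum,
    ← Finset.sum_add_distrib]
  refine Finset.sum_le_sum fun j _ => ?_
  calc euclNorm ((M * centered Θ + ε • centered G)ᵀ j) ^ 2
      ≤ (σ * euclNorm (x j) + |ε| * euclNorm (p j)) ^ 2 := by
        rw [hcolumn]
        exact pow_le_pow_left₀ (euclNorm_nonneg _) (hcolumn_le j) 2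
    _ ≤ (σ * euclNorm (x j)) ^ 2 / t + (|ε| * euclNorm (p j)) ^ 2 / (1 - t) :=
        add_sq_le_div_add_div _ _ ht0 ht1
    _ = σ ^ 2 / t * euclNorm (x j) ^ 2 + ε ^ 2 / (1 - t) * euclNorm (p j) ^ 2 := by
        rw [mul_pow, mul_pow, sq_abs]
        ring

lemma sum_euclNorm_sq_eq_consErr_add (Θ : Matrix (Fin N) (Fin d) ℝ) :
    ∑ i, euclNorm (Θ i) ^ 2 = consErr Θ + N * euclNorm (rowAvg Θ) ^ 2 := by
  rw [consErr_eq_sum_transpose, euclNorm_sq, Finset.mul_sum, ← Finset.sum_add_distrib]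
  simp only [euclNorm_sq]
  rw [Finset.sum_comm]
  refine Finset.sum_congr rfl fun j _ => ?_
  simp only [centered, Matrix.transpose_apply, Matrix.of_apply, sub_sq, Finset.sum_add_distrib,
    Finset.sum_sub_distrib, ← Finset.sum_mul, ← Finset.mul_sum, sum_eq_mul_rowAvg,
    Finset.sum_const, Finset.card_univ, Fintype.card_fin, nsmul_eq_mul]
  ring

lemma consErr_nonneg (Θ : Matrix (Fin N) (Fin d) ℝ) : 0 ≤ consErr Θ :=
  Finset.sum_nonneg fun _ _ => sq_nonneg _

lemma consErr_le_sum_euclNorm_sq (Θ : Matrix (Fin N) (Fin d) ℝ) :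
    consErr Θ ≤ ∑ i, euclNorm (Θ i) ^ 2 := by
  rw [sum_euclNorm_sq_eq_consErr_add]
  have : 0 ≤ (N : ℝ) * euclNorm (rowAvg Θ) ^ 2 := by positivity
  linarith

lemma consErr_le_of_euclNorm_le {Θ G : Matrix (Fin N) (Fin d) ℝ} {B : ℝ}
    (hG : ∀ i, euclNorm (G i) ≤ B * (euclNorm (Θ i) + 1)) :
    consErr G ≤ 2 * B ^ 2 * (consErr Θ + N * euclNorm (rowAvg Θ) ^ 2 + N) := by
  have hrow : ∀ i, euclNorm (G i) ^ 2 ≤ 2 * B ^ 2 * (euclNorm (Θ i) ^ 2 + 1) := fun i =>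
    calc euclNorm (G i) ^ 2 ≤ (B * (euclNorm (Θ i) + 1)) ^ 2 :=
          pow_le_pow_left₀ (euclNorm_nonneg _) (hG i) 2
      _ ≤ 2 * B ^ 2 * (euclNorm (Θ i) ^ 2 + 1) := by
          nlinarith [sq_nonneg B, mul_nonneg (sq_nonneg B) (sq_nonneg (euclNorm (Θ i) - 1))]
  calc consErr G ≤ ∑ i, euclNorm (G i) ^ 2 := consErr_le_sum_euclNorm_sq G
    _ ≤ ∑ i, 2 * B ^ 2 * (euclNorm (Θ i) ^ 2 + 1) := Finset.sum_le_sum fun i _ => hrow i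
    _ = 2 * B ^ 2 * (consErr Θ + N * euclNorm (rowAvg Θ) ^ 2 + N) := by
      rw [← Finset.mul_sum, Finset.sum_add_distrib, sum_euclNorm_sq_eq_consErr_add]
      simp

end Consensus

theorem consensus_error_contraction_general (N d : ℕ) (hN : 1 ≤ N)
    (B σ ε : ℝ) (hB : 0 < B) (hσ0 : 0 ≤ σ) (hσ1 : σ < 1) (hε : 0 ≤ ε)
    (W : Matrix (Fin N) (Fin N) ℝ) (hW : DoublyStochastic W)
    (hWspec : specNorm (W - (N : ℝ)⁻¹ •
      Matrix.of (fun (_ : Fin N) (_ : Fin N) => (1 : ℝ))) ≤ σ)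
    (θstar : Fin d → ℝ)
    (hεsmall : ε ≤ (1 - σ ^ 2) / (8 * Real.sqrt 2 * B * N))
    (Θ G : Matrix (Fin N) (Fin d) ℝ)
    (hG : ∀ i, euclNorm (fun j => G i j) ≤ B * (euclNorm (fun j => Θ i j) + 1))
    (Θ' : Matrix (Fin N) (Fin d) ℝ) (hΘ' : Θ' = W * Θ + ε • G) :
    consErr Θ'
      ≤ (1 + σ ^ 2) / 2 * consErr Θ
        + 32 * ε ^ 2 * B ^ 2 * N / (1 - σ ^ 2) *
            (euclNorm (fun j => rowAvg Θ j - θstar j)) ^ 2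
        + 16 * N * B ^ 2 * ((euclNorm θstar) ^ 2 + 1) / (1 - σ ^ 2) * ε ^ 2 := by
  have hgap : 0 < 1 - σ ^ 2 := by nlinarith
  have hstep := consErr_mul_add_smul_le hW.2.1 hW.2.2 hWspec ε Θ G (t := (3 + σ ^ 2) / 4)
    (by positivity) (by nlinarith)
  have hdrift := consErr_le_of_euclNorm_le hG
  have havg : euclNorm (rowAvg Θ) ^ 2
      ≤ 2 * euclNorm (fun j => rowAvg Θ j - θstar j) ^ 2 + 2 * euclNorm θstar ^ 2 :=
    euclNorm_sq_le_two_mul _ _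
  have hcoef := contraction_factor_le hσ0 hσ1 (mul_sq_le_sq_of_le_div hN hB hε hεsmall)
  set K := ε ^ 2 / (1 - σ ^ 2)
  have h4K : ε ^ 2 / (1 - (3 + σ ^ 2) / 4) = 4 * K := by
    field_simp
    ring
  have hS := consErr_nonneg Θ
  set S := consErr Θ
  set D := euclNorm (fun j => rowAvg Θ j - θstar j) ^ 2
  set T := euclNorm θstar ^ 2
  have hD : 0 ≤ D := sq_nonneg _
  have hBNK : 0 ≤ B ^ 2 * N * K := by positivity
  rw [h4K] at hstep
  rw [hΘ']
  calc consErr (W * Θ + ε • G)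
      ≤ σ ^ 2 / ((3 + σ ^ 2) / 4) * S
          + 4 * K * (2 * B ^ 2 * (S + N * euclNorm (rowAvg Θ) ^ 2 + N)) :=
        hstep.trans (by gcongr)
    _ ≤ (σ ^ 2 / ((3 + σ ^ 2) / 4) + 8 * B ^ 2 * K) * S
          + 8 * (B ^ 2 * N * K) * (2 * D + 2 * T) + 8 * (B ^ 2 * N * K) := by
        linarith [mul_le_mul_of_nonneg_left havg hBNK]
    _ ≤ (1 + σ ^ 2) / 2 * S + 32 * (B ^ 2 * N * K) * D + 16 * (B ^ 2 * N * K) * (T + 1) := by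
        linarith [mul_le_mul_of_nonneg_right hcoef hS, mul_nonneg hBNK hD,
          mul_nonneg hBNK (sq_nonneg (euclNorm θstar))]
    _ = _ := by ring

/-- One-step contraction of the consensus error under spectral gap `σ`:
`S' ≤ ((1+σ²)/2) S + (32 ε² B² N/(1−σ²)) ‖θ̄ − θ*‖² + (16 N B² (‖θ*‖² + 1)/(1−σ²)) ε²`. -/
theorem consensus_error_contraction (N d : ℕ) (hN : 1 ≤ N) (hd : 1 ≤ d)
    (B σ ε : ℝ) (hB : 0 < B) (hσ0 : 0 ≤ σ) (hσ1 : σ < 1) (hε : 0 ≤ ε)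
    (W : Matrix (Fin N) (Fin N) ℝ) (hW : DoublyStochastic W)
    (hWspec : specNorm (W - (N : ℝ)⁻¹ •
      Matrix.of (fun (_ : Fin N) (_ : Fin N) => (1 : ℝ))) ≤ σ)
    (θstar : Fin d → ℝ)
    (hεsmall : ε ≤ (1 - σ ^ 2) / (8 * Real.sqrt 2 * B * N))
    (Θ G : Matrix (Fin N) (Fin d) ℝ)
    (hG : ∀ i, euclNorm (fun j => G i j) ≤ B * (euclNorm (fun j => Θ i j) + 1))
    (Θ' : Matrix (Fin N) (Fin d) ℝ) (hΘ' : Θ' = W * Θ + ε • G) :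
    consErr Θ'
      ≤ (1 + σ ^ 2) / 2 * consErr Θ
        + 32 * ε ^ 2 * B ^ 2 * N / (1 - σ ^ 2) *
            (euclNorm (fun j => rowAvg Θ j - θstar j)) ^ 2
        + 16 * N * B ^ 2 * ((euclNorm θstar) ^ 2 + 1) / (1 - σ ^ 2) * ε ^ 2 :=
  consensus_error_contraction_general N d hN B σ ε hB hσ0 hσ1 hε W hW hWspec θstar hεsmall Θ G hG Θ'
    hΘ'
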